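/- arXiv:1501.06163 — 3 statements merged into one kernel-verified Lean document; each statement's English description precedes it below -/
import Mathlib

section
/- Let E be a real vector space of finite dimension n, let p be an integer with 1 ≤ p ≤ n, let u : Fin p → E be a linearly independent family, and let V be the span of the u i. Let φ be an alternating p-linear form on E with φ(u 0, …, u (p−1)) = 1. Then there exists a unique linear subspace W of E such that (i) V and W are complementary (V ⊓ W = ⊥ and V ⊔ W = ⊤), and (ii) for every w ∈ W and every (p−1)-tuple x 0, …, x (p−2) of vectors all lying in V, one has φ(x 0, …, x (p−2), w) = 0. -/
/-!
Write `c j w = φ (update u j w)` (the form with `w` in slot `j`). Since `φ u = 1` and `φ` is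
alternating, `c j (u k) = δ j k`, so `w ↦ ∑ j, c j w • u j` is a projection onto `V`, and its
kernel `W = ⋂ j, ker (c j)` is a complement of `V`. Expanding multilinearly in a basis of `V`,
`φ (x 0, …, x (p-2), w)` with all `x i ∈ V` is a combination of the values
`φ (u (v 0), …, u (v (p-2)), w)`; each is zero if two indices coincide, and otherwise is
`± c j w` for the missing index `j`. Hence `W` is exactly the set of `w` satisfying (ii), any
other complement with (ii) lies in `W`, and by the modular law a complement of `V` contained in
another one equals it.
-/

open Function Submodule

theorem IsCompl.eq_of_le {α : Type*} [Lattice α] [BoundedOrder α] [IsModularLattice α]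
    {a b c : α} (hb : IsCompl a b) (hc : IsCompl a c) (hbc : b ≤ c) : b = c := by
  have := sup_inf_assoc_of_le a hbc
  rwa [sup_comm, hb.sup_eq_top, top_inf_eq, hc.inf_eq_bot, sup_bot_eq, eq_comm] at this

theorem Fin.ite_val_lt_eq_snoc {α : Type*} {n : ℕ} (x : Fin (n + 1) → α) (w : α) :
    (fun i : Fin (n + 1) => if (i : ℕ) < n then x i else w) = snoc (fun k => x k.castSucc) w := by
  funext i
  induction i using Fin.lastCases <;> simp

namespace AlternatingMap

section Perm

variable {R M N ι : Type*} [Semiring R] [AddCommMonoid M] [Module R M] [AddCommGroup N]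
  [Module R N] [DecidableEq ι]

theorem map_update_apply_eq_ite (φ : M [⋀^ι]→ₗ[R] N) (u : ι → M) (j k : ι) :
    φ (update u j (u k)) = if j = k then φ u else 0 := by
  split_ifs with hjk
  · rw [hjk, update_eq_self]
  · exact φ.map_eq_zero_of_eq _ (i := j) (j := k) (by simp [update_of_ne (Ne.symm hjk)]) hjk

theorem map_comp_perm_eq_zero_iff [Fintype ι] (φ : M [⋀^ι]→ₗ[R] N) (v : ι → M)
    (σ : Equiv.Perm ι) : φ (v ∘ σ) = 0 ↔ φ v = 0 := by
  rw [φ.map_perm, smul_eq_zero_iff_eq]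

end Perm

section Projection

variable {R M ι : Type*} [CommRing R] [AddCommGroup M] [Module R M] [Fintype ι] [DecidableEq ι]
  {u : ι → M}

/-- Cramer's rule: when `φ u = 1` this is a projection onto `span R (range u)`. -/
noncomputable def spanProj (φ : M [⋀^ι]→ₗ[R] R) (hu : LinearIndependent R u) :
    M →ₗ[R] span R (Set.range u) :=
  ∑ j, (φ.toMultilinearMap.toLinearMap u j).smulRight (Module.Basis.span hu j)

theorem spanProj_apply (φ : M [⋀^ι]→ₗ[R] R) (hu : LinearIndependent R u) (w : M) :
    φ.spanProj hu w = ∑ j, φ (update u j w) • Module.Basis.span hu j := by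
  simp [spanProj]

theorem spanProj_apply_coe (φ : M [⋀^ι]→ₗ[R] R) (hu : LinearIndependent R u) (hφ : φ u = 1)
    (v : span R (Set.range u)) : φ.spanProj hu v = v := by
  have hcomp : φ.spanProj hu ∘ₗ (span R (Set.range u)).subtype = LinearMap.id := by
    refine (Module.Basis.span hu).ext fun k => ?_
    simp [spanProj_apply, Module.Basis.span_apply, map_update_apply_eq_ite, hφ]
  exact LinearMap.congr_fun hcomp v

theorem isCompl_ker_spanProj (φ : M [⋀^ι]→ₗ[R] R) (hu : LinearIndependent R u) (hφ : φ u = 1) :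
    IsCompl (span R (Set.range u)) (LinearMap.ker (φ.spanProj hu)) :=
  LinearMap.isCompl_of_proj (φ.spanProj_apply_coe hu hφ)

theorem mem_ker_spanProj_iff (φ : M [⋀^ι]→ₗ[R] R) (hu : LinearIndependent R u) (w : M) :
    w ∈ LinearMap.ker (φ.spanProj hu) ↔ ∀ j, φ (update u j w) = 0 := by
  rw [LinearMap.mem_ker, spanProj_apply]
  exact ⟨Fintype.linearIndependent_iff.mp (Module.Basis.span hu).linearIndependent _,
    fun h => by simp [h]⟩

end Projection

section Snoc

variable {R M N : Type*} [CommRing R] [AddCommGroup M] [Module R M] [AddCommGroup N] [Module R N]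
  {q : ℕ} {u : Fin (q + 1) → M} {w : M}

theorem map_snoc_comp_eq_zero (φ : M [⋀^Fin (q + 1)]→ₗ[R] N)
    (hw : ∀ j, φ (update u j w) = 0) (v : Fin q → Fin (q + 1)) : φ (Fin.snoc (u ∘ v) w) = 0 := by
  by_cases hv : Injective v
  · obtain ⟨j, hj⟩ : ∃ j, j ∉ Set.range v := by
      by_contra! hsurj
      simpa using Fintype.card_le_of_surjective v fun j => hsurj j
    let σ := Equiv.ofBijective _
      (Finite.injective_iff_bijective.mp (Fin.snoc_injective_of_injective hv hj))
    have hσ : Fin.snoc (u ∘ v) w = update u j w ∘ σ := by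
      funext i
      induction i using Fin.lastCases with
      | last => simp [σ]
      | cast k => simp [σ, update_of_ne (ne_of_mem_of_not_mem (Set.mem_range_self k) hj)]
    rw [hσ, map_comp_perm_eq_zero_iff, hw]
  · refine φ.map_eq_zero_of_not_injective _ fun hinj => hv ?_
    exact (Fin.snoc_injective_iff.mp hinj).1.of_comp

theorem map_snoc_eq_zero_of_mem_span (φ : M [⋀^Fin (q + 1)]→ₗ[R] N) (hu : LinearIndependent R u)
    (hw : ∀ j, φ (update u j w) = 0) (y : Fin q → M) (hy : ∀ k, y k ∈ span R (Set.range u)) :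
    φ (Fin.snoc y w) = 0 := by
  let b := Module.Basis.span hu
  let G : MultilinearMap R (fun _ : Fin q => span R (Set.range u)) N :=
    ((LinearMap.applyₗ w).compMultilinearMap φ.toMultilinearMap.curryRight).compLinearMap
      fun _ => (span R (Set.range u)).subtype
  have hG : G = 0 := (Module.Basis.ext_multilinear (fun _ => b)) fun v => by
    simpa [G, b, Module.Basis.span_apply, comp_def] using φ.map_snoc_comp_eq_zero hw v
  simpa [G] using congr($hG fun k => ⟨y k, hy k⟩)

theorem map_update_eq_zero_of_map_snoc_eq_zero (φ : M [⋀^Fin (q + 1)]→ₗ[R] N)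
    (h : ∀ y : Fin q → M, (∀ k, y k ∈ span R (Set.range u)) → φ (Fin.snoc y w) = 0)
    (j : Fin (q + 1)) : φ (update u j w) = 0 := by
  rw [← map_comp_perm_eq_zero_iff _ _ (Equiv.swap j (Fin.last q)), update_comp_equiv,
    Equiv.symm_swap, Equiv.swap_apply_left, ← Fin.snoc_init_self (α := fun _ => M) (update _ _ w),
    Fin.init_update_last, update_self]
  exact h _ fun k => subset_span (Set.mem_range_self _)

theorem mem_ker_spanProj_iff_map_snoc (φ : M [⋀^Fin (q + 1)]→ₗ[R] R) (hu : LinearIndependent R u)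
    (w : M) : w ∈ LinearMap.ker (φ.spanProj hu) ↔
      ∀ y : Fin q → M, (∀ k, y k ∈ span R (Set.range u)) → φ (Fin.snoc y w) = 0 :=
  (φ.mem_ker_spanProj_iff hu w).trans
    ⟨fun hw => φ.map_snoc_eq_zero_of_mem_span hu hw, φ.map_update_eq_zero_of_map_snoc_eq_zero⟩

end Snoc

end AlternatingMap

theorem stmt_0_general (E : Type*) [AddCommGroup E] [Module ℝ E]
    (p : ℕ) (hp1 : 1 ≤ p)
    (u : Fin p → E) (hu : LinearIndependent ℝ u)
    (V : Submodule ℝ E) (hV : V = Submodule.span ℝ (Set.range u))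
    (φ : AlternatingMap ℝ E ℝ (Fin p)) (hφ : φ u = 1) :
    ∃! W : Submodule ℝ E, IsCompl V W ∧
      ∀ w ∈ W, ∀ x : Fin p → E, (∀ i : Fin p, (i : ℕ) < p - 1 → x i ∈ V) →
        φ (fun i => if (i : ℕ) < p - 1 then x i else w) = 0 := by
  subst hV
  obtain ⟨q, rfl⟩ : ∃ q, p = q + 1 := ⟨p - 1, by omega⟩
  have hW (w : E) : w ∈ LinearMap.ker (φ.spanProj hu) ↔
      ∀ x : Fin (q + 1) → E,
        (∀ i : Fin (q + 1), (i : ℕ) < q + 1 - 1 → x i ∈ span ℝ (Set.range u)) →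
        φ (fun i => if (i : ℕ) < q + 1 - 1 then x i else w) = 0 := by
    simp only [Nat.add_sub_cancel, Fin.ite_val_lt_eq_snoc, φ.mem_ker_spanProj_iff_map_snoc]
    refine ⟨fun h x hx => h _ fun k => hx _ k.isLt, fun h y hy => ?_⟩
    have hx (i : Fin (q + 1)) (hi : (i : ℕ) < q) :
        (Fin.snoc y 0 : Fin (q + 1) → E) i ∈ span ℝ (Set.range u) := by
      obtain ⟨k, rfl⟩ : ∃ k : Fin q, k.castSucc = i := ⟨⟨i, hi⟩, rfl⟩
      simpa using hy k
    simpa using h _ hx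
  have hcompl := φ.isCompl_ker_spanProj hu hφ
  refine ⟨_, ⟨hcompl, fun w hw => (hW w).1 hw⟩, fun W ⟨hW', hWφ⟩ => ?_⟩
  exact hW'.eq_of_le hcompl fun w hw => (hW w).2 (hWφ w hw)

/-- Harvey–Lawson lemma (Lemma 3.2), coordinate-free form: given a linearly
independent family `u : Fin p → E` spanning `V` and an alternating `p`-form `φ`
with `φ u = 1`, there is a unique subspace `W` complementary to `V` such that
`φ (x 0, …, x (p-2), w) = 0` whenever all the `x i` lie in `V` and `w ∈ W`. -/
theorem stmt_0 (E : Type*) [AddCommGroup E] [Module ℝ E] [FiniteDimensional ℝ E]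
    (n p : ℕ) (hn : Module.finrank ℝ E = n) (hp1 : 1 ≤ p) (hpn : p ≤ n)
    (u : Fin p → E) (hu : LinearIndependent ℝ u)
    (V : Submodule ℝ E) (hV : V = Submodule.span ℝ (Set.range u))
    (φ : AlternatingMap ℝ E ℝ (Fin p)) (hφ : φ u = 1) :
    ∃! W : Submodule ℝ E, IsCompl V W ∧
      ∀ w ∈ W, ∀ x : Fin p → E, (∀ i : Fin p, (i : ℕ) < p - 1 → x i ∈ V) →
        φ (fun i => if (i : ℕ) < p - 1 then x i else w) = 0 :=
  stmt_0_general E p hp1 u hu V hV φ hφ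
end

section
/- Let E be a real vector space of finite dimension n, let p be an integer with 1 ≤ p ≤ n, let u : Fin p → E be linearly independent spanning V, and let φ be an alternating p-linear form on E with φ(u 0, …, u (p−1)) = 1. Let W be a subspace complementary to V such that φ(x 0, …, x (p−2), w) = 0 whenever all x i ∈ V and w ∈ W. Let b : Fin n → E be any basis of E such that b i = u i for all i < p and b i ∈ W for all i ≥ p. Then for every strictly increasing map ι : Fin p → Fin n which is not the canonical inclusion of Fin p into Fin n and which satisfies ι i < p for all i < p−1 (i.e. at most one of the selected indices is ≥ p), one has φ(b(ι 0), …, b(ι(p−1))) = 0; moreover φ(b 0, …, b(p−1)) = 1. Equivalently, in the expansion of φ in the dual basis p-covectors associated to b, the coefficient of b₀*∧…∧b_{p−1}* is 1 and the coefficient a_I vanishes for every other increasing multi-index I = (i₁ < … < i_p) with i_{p−1} ≤ p (1-based indexing). -/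
/-! A strictly monotone `ι` with all values `< p` is the canonical inclusion, so any other
admissible `ι` sends its last index, and only that one, to some index `≥ p`. Then `b ∘ ι` has the
form `(x₀, …, x_{p-2}, w)` with `xᵢ` among the `u`'s, hence in `V`, and `w ∈ W`, on which `φ`
vanishes by hypothesis. -/

theorem Fin.eq_castLE_of_strictMono {p n : ℕ} (hpn : p ≤ n) {ι : Fin p → Fin n}
    (hι : StrictMono ι) (hlt : ∀ i, (ι i : ℕ) < p) : ι = Fin.castLE hpn := by
  funext i
  have hι' : StrictMono fun i => (⟨ι i, hlt i⟩ : Fin p) := fun _ _ h => hι h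
  exact Fin.ext (congrArg Fin.val (hι'.apply_eq (x := i)) :)

theorem stmt_2_general (E : Type*) [AddCommGroup E] [Module ℝ E]
    (n p : ℕ) (hpn : p ≤ n)
    (u : Fin p → E)
    (V : Submodule ℝ E) (hV : V = Submodule.span ℝ (Set.range u))
    (φ : AlternatingMap ℝ E ℝ (Fin p)) (hφ : φ u = 1)
    (W : Submodule ℝ E)
    (hW : ∀ w ∈ W, ∀ x : Fin p → E, (∀ i : Fin p, (i : ℕ) < p - 1 → x i ∈ V) →
        φ (fun i => if (i : ℕ) < p - 1 then x i else w) = 0)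
    (b : Module.Basis (Fin n) ℝ E)
    (hb₁ : ∀ i : Fin p, b (Fin.castLE hpn i) = u i)
    (hb₂ : ∀ i : Fin n, p ≤ (i : ℕ) → b i ∈ W) :
    (∀ ι : Fin p → Fin n, StrictMono ι → ι ≠ Fin.castLE hpn →
        (∀ i : Fin p, (i : ℕ) < p - 1 → (ι i : ℕ) < p) →
        φ (fun i => b (ι i)) = 0) ∧
      φ (fun i => b (Fin.castLE hpn i)) = 1 := by
  have hbV : ∀ i : Fin n, (i : ℕ) < p → b i ∈ V := fun i hi => by
    rw [show b i = u ⟨i, hi⟩ from hb₁ ⟨i, hi⟩, hV]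
    exact Submodule.subset_span ⟨_, rfl⟩
  refine ⟨fun ι hι hne hlt => ?_, by simp only [hb₁]; exact hφ⟩
  obtain ⟨j, hj⟩ : ∃ j, p ≤ (ι j : ℕ) := by
    by_contra! h
    exact hne (Fin.eq_castLE_of_strictMono hpn hι h)
  have hj_last : ∀ i : Fin p, ¬(i : ℕ) < p - 1 → i = j := fun i hi =>
    Fin.ext (by have := mt (hlt j) hj.not_gt; omega)
  rw [← hW (b (ι j)) (hb₂ _ hj) (fun i => b (ι i)) fun i hi => hbV _ (hlt i hi)]
  congr 1
  funext i
  split_ifs with hi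
  · rfl
  · rw [hj_last i hi]

/-- Harvey–Lawson lemma (Lemma 3.2), basis form: for a basis `b` of `E` whose
first `p` vectors are the `u i` and whose remaining vectors lie in the
complement `W`, the expansion of `φ` in the dual-basis `p`-covectors has
coefficient `1` on `b₀* ∧ ⋯ ∧ b_{p-1}*` and coefficient `0` on every other
increasing multi-index all but possibly the last of whose entries is `< p`. -/
theorem stmt_2 (E : Type*) [AddCommGroup E] [Module ℝ E] [FiniteDimensional ℝ E]
    (n p : ℕ) (hn : Module.finrank ℝ E = n) (hp1 : 1 ≤ p) (hpn : p ≤ n)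
    (u : Fin p → E) (hu : LinearIndependent ℝ u)
    (V : Submodule ℝ E) (hV : V = Submodule.span ℝ (Set.range u))
    (φ : AlternatingMap ℝ E ℝ (Fin p)) (hφ : φ u = 1)
    (W : Submodule ℝ E) (hVW : IsCompl V W)
    (hW : ∀ w ∈ W, ∀ x : Fin p → E, (∀ i : Fin p, (i : ℕ) < p - 1 → x i ∈ V) →
        φ (fun i => if (i : ℕ) < p - 1 then x i else w) = 0)
    (b : Module.Basis (Fin n) ℝ E)
    (hb₁ : ∀ i : Fin p, b (Fin.castLE hpn i) = u i)
    (hb₂ : ∀ i : Fin n, p ≤ (i : ℕ) → b i ∈ W) :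
    (∀ ι : Fin p → Fin n, StrictMono ι → ι ≠ Fin.castLE hpn →
        (∀ i : Fin p, (i : ℕ) < p - 1 → (ι i : ℕ) < p) →
        φ (fun i => b (ι i)) = 0) ∧
      φ (fun i => b (Fin.castLE hpn i)) = 1 :=
  stmt_2_general E n p hpn u V hV φ hφ W hW b hb₁ hb₂
end

section
/- Let E be a real inner product space of finite dimension n, let p be an integer with 1 ≤ p ≤ n, and let u : Fin p → E be an orthonormal family spanning a subspace V. Let ϑ > 0 and let φ be an alternating p-linear form on E with φ(u 0, …, u (p−1)) = ϑ, and let W be a subspace of E with: (i) V and W complementary, (ii) V ⊥ W, and (iii) φ(x 0, …, x (p−2), w) = 0 whenever all x i ∈ V and w ∈ W. Let M ≥ 0 satisfy |φ(x 0, …, x (p−1))| ≤ M · ∏ᵢ ‖x i‖ for all tuples x : Fin p → E, and let C be a real number with C² > ϑ⁻¹ · (n choose p) · M. Define a new inner product on E by ⟨x, y⟩' := ⟨P x, P y⟩ + C² ⟨Q x, Q y⟩, where P and Q are the orthogonal projections of E onto V and onto W respectively, and write ‖z‖' := √⟨z, z⟩'. Then for every tuple x : Fin p → E one has |φ(x 0,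 …, x (p−1))| ≤ ϑ · ∏ᵢ ‖x i‖'; moreover ‖u i‖' = 1 for each i and φ(u 0, …, u (p−1)) = ϑ, so the comass of φ with respect to ⟨·,·⟩' equals ϑ. -/
/-!
Write `xᵢ = P xᵢ + Q xᵢ` and expand `φ x` multilinearly into the terms `φ y_S`, where `y_S` takes
the `V`-components in the slots of `S` and the `W`-components elsewhere. For `S` = all slots,
`φ` restricted to `V` is `ϑ` times a volume form, so Hadamard's inequality bounds the term by
`ϑ ∏ ‖P xᵢ‖`. A term with a single `W`-slot vanishes by (iii), and one with more than
`dim W = n - p` slots in `W` vanishes by linear dependence. With `aᵢ = ‖P xᵢ‖`, `bᵢ = |C| ‖Q xᵢ‖`,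
so that `‖xᵢ‖' = √(aᵢ² + bᵢ²)`, each of the at most `n.choose p` remaining terms is at most
`M C⁻² ∏_S aᵢ ∏_{Sᶜ} bᵢ ≤ M C⁻² (∏ ‖xᵢ‖' - ∏ aᵢ)`, by Cauchy–Schwarz in two `W`-slots;
the choice of `C` makes the total at most `ϑ ∏ ‖xᵢ‖'`.
-/

open Finset Function Module

theorem Submodule.eq_orthogonal_of_isCompl {𝕜 E : Type*} [RCLike 𝕜] [NormedAddCommGroup E]
    [InnerProductSpace 𝕜 E] {K W : Submodule 𝕜 E} (hKW : IsCompl K W)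
    (hperp : ∀ v ∈ K, ∀ w ∈ W, inner 𝕜 v w = 0) : W = Kᗮ :=
  eq_of_le_of_inf_le_of_sup_le (fun w hw => (K.mem_orthogonal w).2 fun v hv => hperp v hv w hw)
    (by rw [inf_comm, K.inf_orthogonal_eq_bot]; exact bot_le)
    (by rw [sup_comm W, hKW.sup_eq_top]; exact le_top)

theorem OrthonormalBasis.abs_det_apply_le {F : Type*} [NormedAddCommGroup F]
    [InnerProductSpace ℝ F] {p : ℕ} (b : OrthonormalBasis (Fin p) ℝ F) (v : Fin p → F) :
    |b.toBasis.det v| ≤ ∏ i, ‖v i‖ := by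
  have : Fact (finrank ℝ F = p) := ⟨by simpa using finrank_eq_card_basis b.toBasis⟩
  rw [← b.toBasis.orientation.volumeForm_robust' b]
  exact b.toBasis.orientation.abs_volumeForm_apply_le v

theorem AlternatingMap.abs_apply_le_of_orthonormalBasis {F : Type*} [NormedAddCommGroup F]
    [InnerProductSpace ℝ F] {p : ℕ} (ψ : F [⋀^Fin p]→ₗ[ℝ] ℝ) (b : OrthonormalBasis (Fin p) ℝ F)
    (v : Fin p → F) : |ψ v| ≤ |ψ b| * ∏ i, ‖v i‖ := by
  conv_lhs => rw [ψ.eq_smul_basis_det b.toBasis]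
  rw [AlternatingMap.smul_apply, smul_eq_mul, abs_mul, b.coe_toBasis]
  exact mul_le_mul_of_nonneg_left (b.abs_det_apply_le v) (abs_nonneg _)

theorem AlternatingMap.abs_apply_le_of_forall_mem_span {E : Type*} [NormedAddCommGroup E]
    [InnerProductSpace ℝ E] {p : ℕ} (φ : E [⋀^Fin p]→ₗ[ℝ] ℝ) {u : Fin p → E}
    (hu : Orthonormal ℝ u) {v : Fin p → E} (hv : ∀ i, v i ∈ Submodule.span ℝ (Set.range u)) :
    |φ v| ≤ |φ u| * ∏ i, ‖v i‖ := by
  let e := Basis.span hu.linearIndependent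
  have he (i : Fin p) : (e i : E) = u i := congrArg Subtype.val (Basis.span_apply _ i)
  have hon : Orthonormal ℝ e := by
    rw [orthonormal_iff_ite] at hu ⊢
    intro i j
    simpa [Submodule.coe_inner, he] using hu i j
  let ψ := φ.compLinearMap (Submodule.span ℝ (Set.range u)).subtype
  simpa [ψ, he] using
    ψ.abs_apply_le_of_orthonormalBasis (e.toOrthonormalBasis hon) fun i => ⟨v i, hv i⟩

theorem Fin.update_pred_eq_ite {α : Type*} {p : ℕ} (hp : 1 ≤ p) (v : Fin p → α) (w : α) :
    update v ⟨p - 1, by omega⟩ w = fun i : Fin p => if (i : ℕ) < p - 1 then v i else w := by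
  ext i
  have hi : i = ⟨p - 1, by omega⟩ ↔ ¬(i : ℕ) < p - 1 := by simp only [Fin.ext_iff]; omega
  simp only [update_apply, hi, ite_not]

theorem AlternatingMap.map_update_eq_zero_of_map_update_eq_zero {R M N ι : Type*} [Semiring R]
    [AddCommMonoid M] [Module R M] [AddCommGroup N] [Module R N] [DecidableEq ι]
    (f : M [⋀^ι]→ₗ[R] N) {V W : Set M} {k : ι}
    (h : ∀ v : ι → M, (∀ i, v i ∈ V) → ∀ w ∈ W, f (update v k w) = 0) (j : ι) {v : ι → M}
    (hv : ∀ i, v i ∈ V) {w : M} (hw : w ∈ W) : f (update v j w) = 0 := by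
  rcases eq_or_ne j k with rfl | hjk
  · exact h v hv w hw
  rw [← neg_eq_zero, ← f.map_swap _ hjk, update_comp_equiv, Equiv.symm_swap,
    Equiv.swap_apply_left]
  exact h _ (fun i => hv _) w hw

theorem AlternatingMap.map_eq_zero_of_finrank_lt {K M N ι : Type*} [Field K] [AddCommGroup M]
    [Module K M] [AddCommGroup N] [Module K N] (f : M [⋀^ι]→ₗ[K] N) {W : Submodule K M}
    [FiniteDimensional K W] {x : ι → M} {s : Finset ι} (hx : ∀ i ∈ s, x i ∈ W)
    (hs : finrank K W < #s) : f x = 0 := by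
  refine f.map_linearDependent x fun hli => hs.not_ge ?_
  have hli_s := hli.comp ((↑) : s → ι) Subtype.val_injective
  calc #s = finrank K (Submodule.span K (Set.range (x ∘ (↑) : s → M))) := by
        rw [finrank_span_eq_card hli_s, Fintype.card_coe]
    _ ≤ finrank K W := Submodule.finrank_mono <| Submodule.span_le.mpr <| by
        rintro _ ⟨i, rfl⟩; exact hx i i.2

theorem Nat.sum_range_choose_le_add_choose (p m : ℕ) :
    ∑ k ∈ range (m + 1), p.choose k ≤ (p + m).choose m := by
  rw [Nat.add_choose_eq, Finset.Nat.sum_antidiagonal_eq_sum_range_succ_mk]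
  exact sum_le_sum fun k _ => Nat.le_mul_of_pos_right _ (Nat.choose_pos (Nat.sub_le _ _))

theorem Finset.card_filter_card_compl_le {α : Type*} [Fintype α] [DecidableEq α] (m : ℕ) :
    #{S : Finset α | #Sᶜ ≤ m} ≤ (Fintype.card α + m).choose m :=
  calc #{S : Finset α | #Sᶜ ≤ m}
      ≤ #((range (m + 1)).biUnion fun k => (powersetCard k univ).image compl) := by
        refine card_le_card fun S hS => ?_
        simp only [mem_filter] at hS
        simp only [mem_biUnion, mem_range, mem_image, mem_powersetCard]
        exact ⟨#Sᶜ, by omega, Sᶜ, ⟨subset_univ _, rfl⟩, compl_compl S⟩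
    _ ≤ ∑ k ∈ range (m + 1), #((powersetCard k (univ : Finset α)).image compl) := card_biUnion_le
    _ ≤ ∑ k ∈ range (m + 1), (Fintype.card α).choose k :=
        sum_le_sum fun k _ => card_image_le.trans (by rw [card_powersetCard, card_univ])
    _ ≤ _ := Nat.sum_range_choose_le_add_choose _ _

theorem Finset.prod_le_prod_sqrt {ι : Type*} [Fintype ι] {a : ι → ℝ} (b : ι → ℝ)
    (ha : ∀ i, 0 ≤ a i) : ∏ i, a i ≤ ∏ i, √(a i ^ 2 + b i ^ 2) :=
  prod_le_prod (fun i _ => ha i) fun i _ => Real.le_sqrt_of_sq_le (by nlinarith [sq_nonneg (b i)])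

theorem Finset.prod_piecewise_add_prod_le_prod_sqrt {ι : Type*} [Fintype ι] [DecidableEq ι]
    {a b : ι → ℝ} (ha : ∀ i, 0 ≤ a i) (hb : ∀ i, 0 ≤ b i) {S : Finset ι} {j k : ι}
    (hj : j ∉ S) (hk : k ∉ S) (hjk : j ≠ k) :
    ∏ i, S.piecewise a b i + ∏ i, a i ≤ ∏ i, √(a i ^ 2 + b i ^ 2) := by
  set N := fun i => √(a i ^ 2 + b i ^ 2)
  set R := (univ.erase j).erase k
  have hsplit (f : ι → ℝ) : ∏ i, f i = f j * f k * ∏ i ∈ R, f i := by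
    rw [mul_assoc, mul_prod_erase _ _ (mem_erase.2 ⟨hjk.symm, mem_univ k⟩),
      mul_prod_erase _ _ (mem_univ j)]
  have haN i : a i ≤ N i := Real.le_sqrt_of_sq_le (by nlinarith [sq_nonneg (b i)])
  have hbN i : b i ≤ N i := Real.le_sqrt_of_sq_le (by nlinarith [sq_nonneg (a i)])
  have hpw : 0 ≤ S.piecewise a b := S.le_piecewise_of_le_of_le ha hb
  have hCS : a j * a k + b j * b k ≤ N j * N k := by
    rw [← Real.sqrt_mul (by positivity)]
    exact Real.le_sqrt_of_sq_le (by nlinarith [sq_nonneg (a j * b k - a k * b j)])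
  have hRpw : ∏ i ∈ R, S.piecewise a b i ≤ ∏ i ∈ R, N i :=
    prod_le_prod (fun i _ => hpw i) fun i _ => S.piecewise_le_of_le_of_le haN hbN i
  have hRa : ∏ i ∈ R, a i ≤ ∏ i ∈ R, N i := prod_le_prod (fun i _ => ha i) fun i _ => haN i
  rw [hsplit, hsplit a, hsplit N, piecewise_eq_of_notMem _ _ _ hj,
    piecewise_eq_of_notMem _ _ _ hk]
  calc b j * b k * ∏ i ∈ R, S.piecewise a b i + a j * a k * ∏ i ∈ R, a i
      ≤ b j * b k * ∏ i ∈ R, N i + a j * a k * ∏ i ∈ R, N i :=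
        add_le_add (mul_le_mul_of_nonneg_left hRpw (mul_nonneg (hb j) (hb k)))
          (mul_le_mul_of_nonneg_left hRa (mul_nonneg (ha j) (ha k)))
    _ = (a j * a k + b j * b k) * ∏ i ∈ R, N i := by ring
    _ ≤ N j * N k * ∏ i ∈ R, N i := by gcongr

section RescaledComass

variable {E ι : Type*} [NormedAddCommGroup E] [InnerProductSpace ℝ E] [Fintype ι] [DecidableEq ι]
  {φ : E [⋀^ι]→ₗ[ℝ] ℝ} {M C : ℝ}

theorem AlternatingMap.abs_map_piecewise_le (hbound : ∀ x, |φ x| ≤ M * ∏ i, ‖x i‖)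
    (hM : 0 ≤ M) (hC : 1 ≤ |C|) {S : Finset ι} (hS : 2 ≤ #Sᶜ) (v w : ι → E) :
    |φ (S.piecewise v w)| ≤ M / C ^ 2 * ∏ i, S.piecewise (‖v ·‖) (|C| * ‖w ·‖) i := by
  have hnorm : (‖S.piecewise v w ·‖) = S.piecewise (‖v ·‖) (‖w ·‖) := by
    ext i; by_cases hi : i ∈ S <;> simp [hi]
  have hscale : ∏ i, S.piecewise (‖v ·‖) (|C| * ‖w ·‖) i
      = |C| ^ #Sᶜ * ∏ i, ‖S.piecewise v w i‖ := by
    rw [hnorm, prod_piecewise, prod_piecewise, prod_mul_distrib, prod_const,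
      ← compl_eq_univ_sdiff]
    ring
  have hpow : C ^ 2 ≤ |C| ^ #Sᶜ := by
    rw [← sq_abs]; exact pow_le_pow_right₀ hC hS
  have hC0 : 0 < C ^ 2 := by nlinarith [sq_abs C]
  rw [hscale, div_mul_eq_mul_div, le_div_iff₀ hC0]
  calc |φ (S.piecewise v w)| * C ^ 2 ≤ (M * ∏ i, ‖S.piecewise v w i‖) * |C| ^ #Sᶜ := by
        gcongr
        exact hbound _
    _ = M * (|C| ^ #Sᶜ * ∏ i, ‖S.piecewise v w i‖) := by ring

variable [FiniteDimensional ℝ E] {V W : Submodule ℝ E} {ϑ : ℝ} {m : ℕ}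

theorem AlternatingMap.abs_map_piecewise_le_of_ne_univ (hbound : ∀ x, |φ x| ≤ M * ∏ i, ‖x i‖)
    (hM : 0 ≤ M) (hC : 1 ≤ |C|)
    (hVW : ∀ v : ι → E, (∀ i, v i ∈ V) → ∀ j, ∀ w ∈ W, φ (update v j w) = 0)
    (hm : finrank ℝ W ≤ m) {v w : ι → E} (hv : ∀ i, v i ∈ V) (hw : ∀ i, w i ∈ W)
    {S : Finset ι} (hS : S ≠ univ) :
    |φ (S.piecewise v w)| ≤ if #Sᶜ ≤ m then
      M / C ^ 2 * (∏ i, √(‖v i‖ ^ 2 + (|C| * ‖w i‖) ^ 2) - ∏ i, ‖v i‖) else 0 := by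
  split_ifs with hSm
  · have hpos : 0 < #Sᶜ := card_pos.2 <| nonempty_iff_ne_empty.2 <| by
      rwa [Ne, compl_eq_empty_iff]
    obtain hS1 | hS2 : #Sᶜ = 1 ∨ 2 ≤ #Sᶜ := by omega
    · obtain ⟨j, hj⟩ := card_eq_one.1 hS1
      have hSj : S = univ.erase j := by rw [← compl_singleton, ← hj, compl_compl]
      rw [hSj, piecewise_erase_univ, hVW v hv j (w j) (hw j), abs_zero]
      exact mul_nonneg (by positivity) (sub_nonneg.2 <| prod_le_prod_sqrt _ fun i => norm_nonneg _)
    · obtain ⟨j, hj, k, hk, hjk⟩ := one_lt_card.1 hS2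
      refine (φ.abs_map_piecewise_le hbound hM hC hS2 v w).trans <|
        mul_le_mul_of_nonneg_left (le_sub_iff_add_le.2 ?_) (by positivity)
      exact prod_piecewise_add_prod_le_prod_sqrt (fun i => norm_nonneg _)
        (fun i => by positivity) (mem_compl.1 hj) (mem_compl.1 hk) hjk
  · rw [φ.map_eq_zero_of_finrank_lt (s := Sᶜ) (fun i hi => ?_) (hm.trans_lt (not_le.1 hSm)),
      abs_zero]
    rw [piecewise_eq_of_notMem _ _ _ (mem_compl.1 hi)]
    exact hw i

theorem AlternatingMap.abs_apply_le_prod_sqrt (hbound : ∀ x, |φ x| ≤ M * ∏ i, ‖x i‖)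
    (hM : 0 ≤ M) (hC : 1 ≤ |C|)
    (hV : ∀ v : ι → E, (∀ i, v i ∈ V) → |φ v| ≤ ϑ * ∏ i, ‖v i‖)
    (hVW : ∀ v : ι → E, (∀ i, v i ∈ V) → ∀ j, ∀ w ∈ Vᗮ, φ (update v j w) = 0)
    (hm : finrank ℝ Vᗮ ≤ m) (hCM : (Fintype.card ι + m).choose m * M ≤ ϑ * C ^ 2)
    (x : ι → E) :
    |φ x| ≤ ϑ * ∏ i, √(‖V.starProjection (x i)‖ ^ 2 + C ^ 2 * ‖Vᗮ.starProjection (x i)‖ ^ 2) := by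
  set v := fun i => V.starProjection (x i)
  set w := fun i => Vᗮ.starProjection (x i)
  have hv i : v i ∈ V := V.starProjection_apply_mem _
  have hw i : w i ∈ Vᗮ := Vᗮ.starProjection_apply_mem _
  have hnorm i : ‖V.starProjection (x i)‖ ^ 2 + C ^ 2 * ‖Vᗮ.starProjection (x i)‖ ^ 2
      = ‖v i‖ ^ 2 + (|C| * ‖w i‖) ^ 2 := by
    simp only [v, w, mul_pow, sq_abs]
  simp only [hnorm]
  set N := ∏ i, √(‖v i‖ ^ 2 + (|C| * ‖w i‖) ^ 2)
  set K := M / C ^ 2 * (N - ∏ i, ‖v i‖)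
  have hgap : 0 ≤ N - ∏ i, ‖v i‖ := sub_nonneg.2 <| prod_le_prod_sqrt _ fun i => norm_nonneg _
  have hK : 0 ≤ K := mul_nonneg (by positivity) hgap
  have hsum : ∑ S ∈ (univ : Finset (Finset ι)).erase univ, (if #Sᶜ ≤ m then K else 0)
      ≤ (Fintype.card ι + m).choose m * K :=
    calc ∑ S ∈ (univ : Finset (Finset ι)).erase univ, (if #Sᶜ ≤ m then K else 0)
        ≤ ∑ S : Finset ι, (if #Sᶜ ≤ m then K else 0) := by
          refine sum_le_sum_of_subset_of_nonneg (erase_subset _ _) fun S _ _ => ?_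
          split_ifs <;> linarith
      _ = #{S : Finset ι | #Sᶜ ≤ m} * K := by rw [← sum_filter, sum_const, nsmul_eq_mul]
      _ ≤ _ := by gcongr; exact_mod_cast card_filter_card_compl_le m
  have hKϑ : (Fintype.card ι + m).choose m * K ≤ ϑ * (N - ∏ i, ‖v i‖) := by
    have hC0 : 0 < C ^ 2 := by nlinarith [sq_abs C]
    rw [← mul_assoc, mul_div_assoc']
    gcongr
    rwa [div_le_iff₀ hC0]
  have hexpand : φ x = φ v + ∑ S ∈ (univ : Finset (Finset ι)).erase univ, φ (S.piecewise v w) := by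
    have hx : v + w = x := funext fun i => V.starProjection_add_starProjection_orthogonal _
    calc φ x = ∑ S : Finset ι, φ (S.piecewise v w) := by
          rw [← hx]; exact φ.toMultilinearMap.map_add_univ v w
      _ = _ := by rw [← add_sum_erase _ _ (mem_univ univ), piecewise_univ]
  calc |φ x| ≤ |φ v| + ∑ S ∈ (univ : Finset (Finset ι)).erase univ, |φ (S.piecewise v w)| := by
        rw [hexpand]
        exact (abs_add_le _ _).trans (add_le_add_right (abs_sum_le_sum_abs _ _) _)
    _ ≤ ϑ * ∏ i, ‖v i‖ + (Fintype.card ι + m).choose m * K :=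
        add_le_add (hV v hv) <| (sum_le_sum fun S hS => φ.abs_map_piecewise_le_of_ne_univ
          hbound hM hC hVW hm hv hw (ne_of_mem_erase hS)).trans hsum
    _ ≤ ϑ * N := by linarith

end RescaledComass

open RealInnerProductSpace in
theorem stmt_4_general (E : Type*) [NormedAddCommGroup E] [InnerProductSpace ℝ E]
    [FiniteDimensional ℝ E]
    (n p : ℕ) (hn : Module.finrank ℝ E = n) (hp1 : 1 ≤ p) (hpn : p ≤ n)
    (u : Fin p → E) (hu : Orthonormal ℝ u)
    (V : Submodule ℝ E) (hV : V = Submodule.span ℝ (Set.range u))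
    (ϑ : ℝ) (hϑ : 0 < ϑ)
    (φ : AlternatingMap ℝ E ℝ (Fin p)) (hφ : φ u = ϑ)
    (W : Submodule ℝ E) (hVW : IsCompl V W)
    (hperp : ∀ v ∈ V, ∀ w ∈ W, ⟪v, w⟫ = 0)
    (hW : ∀ w ∈ W, ∀ x : Fin p → E, (∀ i : Fin p, (i : ℕ) < p - 1 → x i ∈ V) →
        φ (fun i => if (i : ℕ) < p - 1 then x i else w) = 0)
    (M : ℝ)
    (hbound : ∀ x : Fin p → E, |φ x| ≤ M * ∏ i, ‖x i‖)
    (C : ℝ) (hC : C ^ 2 > ϑ⁻¹ * ((n.choose p : ℝ) * M))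
    (P Q : E → E)
    (hP : ∀ x : E, P x = (V.orthogonalProjectionOnto x : E))
    (hQ : ∀ x : E, Q x = (W.orthogonalProjectionOnto x : E))
    (inner' : E → E → ℝ)
    (hinner' : ∀ x y : E, inner' x y = ⟪P x, P y⟫ + C ^ 2 * ⟪Q x, Q y⟫)
    (norm' : E → ℝ) (hnorm' : ∀ z : E, norm' z = Real.sqrt (inner' z z)) :
    (∀ x : Fin p → E, |φ x| ≤ ϑ * ∏ i, norm' (x i)) ∧
      (∀ i : Fin p, norm' (u i) = 1) ∧ φ u = ϑ := by
  have huV i : u i ∈ V := hV ▸ Submodule.subset_span ⟨i, rfl⟩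
  obtain rfl : W = Vᗮ := Submodule.eq_orthogonal_of_isCompl hVW hperp
  have hnorm'_eq z : norm' z = √(‖V.starProjection z‖ ^ 2 + C ^ 2 * ‖Vᗮ.starProjection z‖ ^ 2) := by
    rw [hnorm', hinner', hP, hQ, real_inner_self_eq_norm_sq, real_inner_self_eq_norm_sq,
      ← V.starProjection_apply, ← Vᗮ.starProjection_apply]
  have hϑM : ϑ ≤ M := by
    simpa [hφ, abs_of_pos hϑ, hu.1] using hbound u
  have hCM : (n.choose p : ℝ) * M < ϑ * C ^ 2 := (inv_mul_lt_iff₀ hϑ).1 hC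
  have hC1 : 1 ≤ |C| := by
    have : (1 : ℝ) ≤ n.choose p := by exact_mod_cast Nat.choose_pos hpn
    rw [← one_le_sq_iff_one_le_abs]
    nlinarith
  have hdim : finrank ℝ Vᗮ = n - p := by
    have hdimV : finrank ℝ V = p := by
      rw [hV, finrank_span_eq_card hu.linearIndependent, Fintype.card_fin]
    have := V.finrank_add_finrank_orthogonal
    omega
  have hW_last (v : Fin p → E) (hv : ∀ i, v i ∈ V) (w : E) (hw : w ∈ Vᗮ) :
      φ (update v ⟨p - 1, by omega⟩ w) = 0 := by
    rw [Fin.update_pred_eq_ite hp1]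
    exact hW w hw v fun i _ => hv i
  refine ⟨fun x => ?_, fun i => ?_, hφ⟩
  · simp only [hnorm'_eq]
    refine φ.abs_apply_le_prod_sqrt hbound (hϑ.le.trans hϑM) hC1 (fun v hv => ?_)
      (fun v hv j w hw => φ.map_update_eq_zero_of_map_update_eq_zero hW_last j hv hw) hdim.le ?_ x
    · simpa [hφ, abs_of_pos hϑ] using φ.abs_apply_le_of_forall_mem_span hu fun i => hV ▸ hv i
    · rw [Fintype.card_fin, add_tsub_cancel_of_le hpn, Nat.choose_symm hpn]
      exact hCM.le
  · rw [hnorm'_eq, V.starProjection_eq_self_iff.2 (huV i),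
      Vᗮ.starProjection_apply_eq_zero_iff.2 (V.le_orthogonal_orthogonal (huV i)), hu.1 i]
    norm_num

open RealInnerProductSpace in
/-- Remark 3.5: the rescaled variant of the Harvey–Lawson lemma for a form with
`φ u = ϑ > 0`.  Taking `C² > ϑ⁻¹ · (n choose p) · M` and rescaling the metric by
`C²` on the complement `W` makes the comass of `φ` with respect to the new
inner product equal to `ϑ`, while the orthonormal frame `u` stays of norm `1`
and `φ` still takes the value `ϑ` on it. -/
theorem stmt_4 (E : Type*) [NormedAddCommGroup E] [InnerProductSpace ℝ E]
    [FiniteDimensional ℝ E]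
    (n p : ℕ) (hn : Module.finrank ℝ E = n) (hp1 : 1 ≤ p) (hpn : p ≤ n)
    (u : Fin p → E) (hu : Orthonormal ℝ u)
    (V : Submodule ℝ E) (hV : V = Submodule.span ℝ (Set.range u))
    (ϑ : ℝ) (hϑ : 0 < ϑ)
    (φ : AlternatingMap ℝ E ℝ (Fin p)) (hφ : φ u = ϑ)
    (W : Submodule ℝ E) (hVW : IsCompl V W)
    (hperp : ∀ v ∈ V, ∀ w ∈ W, ⟪v, w⟫ = 0)
    (hW : ∀ w ∈ W, ∀ x : Fin p → E, (∀ i : Fin p, (i : ℕ) < p - 1 → x i ∈ V) →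
        φ (fun i => if (i : ℕ) < p - 1 then x i else w) = 0)
    (M : ℝ) (hM : 0 ≤ M)
    (hbound : ∀ x : Fin p → E, |φ x| ≤ M * ∏ i, ‖x i‖)
    (C : ℝ) (hC : C ^ 2 > ϑ⁻¹ * ((n.choose p : ℝ) * M))
    (P Q : E → E)
    (hP : ∀ x : E, P x = (V.orthogonalProjectionOnto x : E))
    (hQ : ∀ x : E, Q x = (W.orthogonalProjectionOnto x : E))
    (inner' : E → E → ℝ)
    (hinner' : ∀ x y : E, inner' x y = ⟪P x, P y⟫ + C ^ 2 * ⟪Q x, Q y⟫)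
    (norm' : E → ℝ) (hnorm' : ∀ z : E, norm' z = Real.sqrt (inner' z z)) :
    (∀ x : Fin p → E, |φ x| ≤ ϑ * ∏ i, norm' (x i)) ∧
      (∀ i : Fin p, norm' (u i) = 1) ∧ φ u = ϑ :=
  stmt_4_general E n p hn hp1 hpn u hu V hV ϑ hϑ φ hφ W hVW hperp hW M hbound C hC P Q hP hQ inner'
    hinner' norm' hnorm'
end
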